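/- Let K ≥ 1, α ∈ (0,∞)^K with θ := ∑_{i=1}^K α_i, β > 0, and define h(z, m, s) := ∏_{i=1}^K h_{α_i}^C(z_i, m_i, s) for z ∈ (0,∞)^K, m ∈ ℕ^K, s ≥ 0. Then for all such z, m, s: ∂h/∂s (z, m, s) = ((θ+|m|)/(β+s)) h(z, m, s) − ∑_{i=1}^K ((α_i+m_i)/(β+s)) h(z, m+e_i, s), where |m| := ∑_i m_i, e_i is the i-th unit vector, and the s-derivative is the derivative of the smooth map s ↦ h(z,m,s) (defined for s > −β). This is the s-derivative identity used to verify the local duality in the proof of Theorem 4.1. -/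

import Mathlib

/-! Each factor `u ↦ h_a^C(z, m, u)` has logarithmic derivative `(a + m)/(β + u) - z`, so the
logarithmic derivative of the product is the sum of these. The term `zᵢ h(z, m, s)` is then
rewritten as `(αᵢ + mᵢ)/(β + s) h(z, m + eᵢ, s)` using `Γ(a + m + 1) = (a + m) Γ(a + m)`. -/

open Finset

/-- The gamma-type duality function `h_a^C(z, m, s)`. -/
noncomputable def hC (β a z : ℝ) (m : ℕ) (s : ℝ) : ℝ :=
  (Real.Gamma a / Real.Gamma (a + m)) * ((β + s) / β) ^ a * (β + s) ^ m * z ^ m *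
    Real.exp (-s * z)

/-- The product duality function `h(z, m, s) = ∏ᵢ h_{αᵢ}^C(zᵢ, mᵢ, s)`. -/
noncomputable def Hprod {K : ℕ} (α : Fin K → ℝ) (β : ℝ)
    (z : Fin K → ℝ) (m : Fin K → ℕ) (s : ℝ) : ℝ :=
  ∏ i, hC β (α i) (z i) (m i) s

section LogDeriv

variable {𝕜 𝔸 ι : Type*} [NontriviallyNormedField 𝕜] [NormedCommRing 𝔸] [NormedAlgebra 𝕜 𝔸]
  {x : 𝕜}

theorem HasDerivAt.finsetProd_of_logDeriv [DecidableEq ι] {u : Finset ι} {f : ι → 𝕜 → 𝔸}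
    {c : ι → 𝔸} (hf : ∀ i ∈ u, HasDerivAt (f i) (c i * f i x) x) :
    HasDerivAt (∏ i ∈ u, f i ·) ((∑ i ∈ u, c i) * ∏ i ∈ u, f i x) x := by
  convert HasDerivAt.fun_finsetProd hf using 1
  rw [sum_mul]
  refine sum_congr rfl fun i hi => ?_
  rw [smul_eq_mul, ← mul_prod_erase u _ hi]
  ring

end LogDeriv

section DualityFunction

variable {β a z s : ℝ}

theorem hasDerivAt_hC (m : ℕ) (hβ : 0 < β) (hβs : 0 < β + s) :
    HasDerivAt (hC β a z m) (((a + m) / (β + s) - z) * hC β a z m s) s := by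
  have hbase : HasDerivAt (fun u => (β + u) / β) (1 / β) s := by
    simpa using ((hasDerivAt_id s).const_add β).div_const β
  have hpow_a : HasDerivAt (fun u => ((β + u) / β) ^ a) (a / (β + s) * ((β + s) / β) ^ a) s := by
    convert hbase.rpow_const (p := a) (Or.inl (div_pos hβs hβ).ne') using 1
    rw [Real.rpow_sub (div_pos hβs hβ), Real.rpow_one]
    field_simp
  have hpow_m : HasDerivAt (fun u => (β + u) ^ m) (m / (β + s) * (β + s) ^ m) s := by
    refine (((hasDerivAt_id' s).const_add β).fun_pow m).congr_deriv ?_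
    rcases m with _ | n
    · simp
    · rw [Nat.add_sub_cancel, pow_succ]
      field_simp
  have hexp : HasDerivAt (fun u => Real.exp (-u * z)) (-z * Real.exp (-s * z)) s :=
    ((hasDerivAt_id' s).fun_neg.mul_const z).exp.congr_deriv (by ring)
  refine ((((hpow_a.const_mul (Real.Gamma a / Real.Gamma (a + m))).fun_mul hpow_m).mul_const
    (z ^ m)).fun_mul hexp).congr_deriv ?_
  simp only [hC]
  ring

theorem hC_succ (m : ℕ) (ha : 0 < a) (hβs : 0 < β + s) :
    (a + m) / (β + s) * hC β a z (m + 1) s = z * hC β a z m s := by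
  have ham : 0 < a + m := by positivity
  have hΓ : Real.Gamma (a + (m + 1 : ℕ)) = (a + m) * Real.Gamma (a + m) := by
    rw [Nat.cast_succ, ← add_assoc, Real.Gamma_add_one ham.ne']
  have := (Real.Gamma_pos_of_pos ham).ne'
  simp only [hC, hΓ, pow_succ]
  field_simp

end DualityFunction

section ProductDualityFunction

variable {K : ℕ} {α : Fin K → ℝ} {β : ℝ} {z : Fin K → ℝ} {s : ℝ}

theorem hasDerivAt_Hprod (m : Fin K → ℕ) (hβ : 0 < β) (hβs : 0 < β + s) :
    HasDerivAt (Hprod α β z m)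
      ((∑ i, ((α i + m i) / (β + s) - z i)) * Hprod α β z m s) s :=
  HasDerivAt.finsetProd_of_logDeriv fun i _ => hasDerivAt_hC (m i) hβ hβs

theorem Hprod_add_single (m : Fin K → ℕ) (hα : ∀ i, 0 < α i) (hβs : 0 < β + s) (i : Fin K) :
    (α i + m i) / (β + s) * Hprod α β z (m + Pi.single i 1) s = z i * Hprod α β z m s := by
  have hrest : ∏ j ∈ univ.erase i, hC β (α j) (z j) ((m + Pi.single i 1 : Fin K → ℕ) j) s
      = ∏ j ∈ univ.erase i, hC β (α j) (z j) (m j) s :=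
    prod_congr rfl fun j hj => by simp [Pi.single_eq_of_ne (ne_of_mem_erase hj)]
  rw [Hprod, Hprod, ← mul_prod_erase univ _ (mem_univ i), ← mul_prod_erase univ _ (mem_univ i),
    hrest, ← mul_assoc, ← mul_assoc, Pi.add_apply, Pi.single_eq_same, hC_succ _ (hα i) hβs]

end ProductDualityFunction

theorem stmt12 (K : ℕ) (α : Fin K → ℝ) (hα : ∀ i, 0 < α i)
    (β : ℝ) (hβ : 0 < β) (m : Fin K → ℕ) (s : ℝ) (hs : 0 ≤ s)
    (z : Fin K → ℝ) :
    deriv (fun u => Hprod α β z m u) s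
      = ((∑ i, α i) + ∑ i, (m i : ℝ)) / (β + s) * Hprod α β z m s
        - ∑ i, (α i + m i) / (β + s) * Hprod α β z (m + Pi.single i 1) s := by
  have hβs : 0 < β + s := by linarith
  rw [(hasDerivAt_Hprod m hβ hβs).deriv]
  simp only [Hprod_add_single m hα hβs, sum_sub_distrib, sub_mul, ← sum_mul, ← sum_div,
    sum_add_distrib]
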